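/- Consistency of the discretized market: under the standing Assumption (for any $(H,h)$ with $h \ne 0$ there exists a path $s \in \Omega$ along which $(H\cdot S)_T + h\cdot g < 0$) and continuity of $g$, if $c^n \to 0$ then for all $n$ large enough the discretized market on $\Omega^n$ with option prices $c^n$ admits no arbitrage: there is no $(H^n, h^n) \in \mathcal{H}^n \times \mathbb{R}^e$ with $(H^n \cdot S)_T + h^n\cdot(g - c^n) \ge 0$ on all of $\Omega^n$ with strict inequality on some path. -/

import Mathlib

/-!
If arbitrages existed for infinitely many `n`, then, since the grid `Ωⁿ` contains the endpoints
`a t`, `b t`, a purely dynamic arbitrage is impossible and the static positions can be normalised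
to `‖h‖ = 1`. Superhedging along the grid paths that jump at time `t` to `a (t+1)` or `b (t+1)`
and then stay put gives `γ |H t| ≤ K + (H · S)_t`, where `γ` is the smallest gap between
consecutive bounds and `K` bounds the static payoff; by induction the strategies are bounded
uniformly in `n`. Evaluating them at the dyadic rounding of a path and passing to a limit yields
an adapted strategy on `Ω` that, together with a position `h` of norm one, superhedges `0` on
all of `Ω` (by continuity of `g` and `cⁿ → 0`), contradicting the standing assumption.
-/

/-- A dynamic trading strategy adapted on the path set `A`:
`H t` depends only on the path up to time `t`. -/
def AdaptedOn (A : Set (ℕ → ℝ)) (H : ℕ → (ℕ → ℝ) → ℝ) : Prop :=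
  ∀ t : ℕ, ∀ s ∈ A, ∀ s' ∈ A, (∀ j, j ≤ t → s j = s' j) → H t s = H t s'

/-- A stopping time on the path set `A` with horizon `T`. -/
def IsStopOn (T : ℕ) (A : Set (ℕ → ℝ)) (τ : (ℕ → ℝ) → ℕ) : Prop :=
  (∀ s ∈ A, τ s ≤ T) ∧
  ∀ s ∈ A, ∀ s' ∈ A, (∀ j, j ≤ τ s → s j = s' j) → τ s' = τ s

/-- The terminal gains `(H · S)_T` of dynamic trading along the path `s`. -/
noncomputable def gains (T : ℕ) (H : ℕ → (ℕ → ℝ) → ℝ) (s : ℕ → ℝ) : ℝ :=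
  ∑ t ∈ Finset.range T, H t s * (s (t + 1) - s t)
/-- The compact path space `Ω = {1} × [a 1, b 1] × ⋯ × [a T, b T]`. -/
def pathSpace (T : ℕ) (a b : ℕ → ℝ) : Set (ℕ → ℝ) :=
  {s | s 0 = 1 ∧ ∀ i, 1 ≤ i → i ≤ T → a i ≤ s i ∧ s i ≤ b i}

/-- The dyadic discretization `Ωⁿ = Ω ∩ {0, 1/2ⁿ, 2/2ⁿ, …}^{T+1}`. -/
def gridSpace (T n : ℕ) (a b : ℕ → ℝ) : Set (ℕ → ℝ) :=
  {s ∈ pathSpace T a b | ∀ j ≤ T, ∃ k : ℕ, s j = (k : ℝ) / 2 ^ n}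

open Filter Topology Set

section

variable {T n : ℕ} {a b : ℕ → ℝ}

/-- Paths are indexed by all of `ℕ`; stopping them at `T` makes `pathSpace` compact, so that the
continuous payoffs `g` are bounded there. -/
def stoppedPaths (T : ℕ) : Set (ℕ → ℝ) := {s | ∀ j, T ≤ j → s j = s T}

def GainsNonnegOn (A : Set (ℕ → ℝ)) (T : ℕ) (H : ℕ → (ℕ → ℝ) → ℝ) (ψ : (ℕ → ℝ) → ℝ) : Prop :=
  ∀ s ∈ A, 0 ≤ gains T H s + ψ s

lemma gains_succ (t : ℕ) (H : ℕ → (ℕ → ℝ) → ℝ) (s : ℕ → ℝ) :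
    gains (t + 1) H s = gains t H s + H t s * (s (t + 1) - s t) :=
  Finset.sum_range_succ _ t

lemma gains_const_mul (r : ℝ) (H : ℕ → (ℕ → ℝ) → ℝ) (s : ℕ → ℝ) :
    gains T (fun t s => r * H t s) s = r * gains T H s := by
  simp only [gains, Finset.mul_sum, mul_assoc]

lemma AdaptedOn.const_mul {A : Set (ℕ → ℝ)} {H : ℕ → (ℕ → ℝ) → ℝ} (hH : AdaptedOn A H) (r : ℝ) :
    AdaptedOn A fun t s => r * H t s :=
  fun t s hs s' hs' hss' => congrArg (r * ·) (hH t s hs s' hs' hss')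

lemma mem_Icc_of_mem_pathSpace (ha0 : a 0 = 1) (hb0 : b 0 = 1) {s : ℕ → ℝ}
    (hs : s ∈ pathSpace T a b) {j : ℕ} (hj : j ≤ T) : s j ∈ Icc (a j) (b j) := by
  rcases Nat.eq_zero_or_pos j with rfl | hj0
  · simp [hs.1, ha0, hb0]
  · exact hs.2 j hj0 hj

lemma isClosed_pathSpace : IsClosed (pathSpace T a b) := by
  simp only [pathSpace, ofPred_and, ofPred_forall]
  refine (isClosed_eq (continuous_apply 0) continuous_const).inter
    (isClosed_iInter fun i => isClosed_iInter fun _ => isClosed_iInter fun _ => ?_)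
  exact (isClosed_le continuous_const (continuous_apply i)).inter
    (isClosed_le (continuous_apply i) continuous_const)

lemma isClosed_stoppedPaths : IsClosed (stoppedPaths T) := by
  simp only [stoppedPaths, ofPred_forall]
  exact isClosed_iInter fun j => isClosed_iInter fun _ =>
    isClosed_eq (continuous_apply j) (continuous_apply T)

lemma isCompact_pathSpace_inter_stoppedPaths (ha0 : a 0 = 1) (hb0 : b 0 = 1) :
    IsCompact (pathSpace T a b ∩ stoppedPaths T) := by
  refine (isCompact_univ_pi fun j => isCompact_Icc (a := a (min j T)) (b := b (min j T)))
    |>.of_isClosed_subset (isClosed_pathSpace.inter isClosed_stoppedPaths) ?_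
  rintro s ⟨hs, hstop⟩
  refine mem_univ_pi.2 fun j => ?_
  rcases le_total j T with hj | hj
  · rw [min_eq_left hj]
    exact mem_Icc_of_mem_pathSpace ha0 hb0 hs hj
  · rw [min_eq_right hj, hstop j hj]
    exact mem_Icc_of_mem_pathSpace ha0 hb0 hs le_rfl

def branch (s : ℕ → ℝ) (t : ℕ) (u : ℝ) : ℕ → ℝ := fun j => if j ≤ t then s j else u

lemma branch_mem_stoppedPaths {t : ℕ} (ht : t < T) (s : ℕ → ℝ) (u : ℝ) :
    branch s t u ∈ stoppedPaths T := by
  intro j hj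
  simp [branch, (ht.trans_le hj).not_ge, ht.not_ge]

lemma branch_mem_gridSpace {s : ℕ → ℝ} {t : ℕ} {u : ℝ} (hs : s ∈ gridSpace T n a b)
    (hu : ∀ i, t < i → i ≤ T → u ∈ Icc (a i) (b i)) (hun : ∃ k : ℕ, u = k / 2 ^ n) :
    branch s t u ∈ gridSpace T n a b := by
  obtain ⟨⟨hs0, hsab⟩, hsn⟩ := hs
  refine ⟨⟨by simpa [branch] using hs0, fun i hi hiT => ?_⟩, fun j hj => ?_⟩
  · by_cases hit : i ≤ t
    · simpa [branch, hit] using hsab i hi hiT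
    · simpa [branch, hit] using hu i (not_le.1 hit) hiT
  · by_cases hjt : j ≤ t
    · simpa [branch, hjt] using hsn j hj
    · simpa [branch, hjt] using hun

lemma gains_branch {A : Set (ℕ → ℝ)} {H : ℕ → (ℕ → ℝ) → ℝ} (hH : AdaptedOn A H)
    {s : ℕ → ℝ} {t : ℕ} {u : ℝ} (hs : s ∈ A) (hbr : branch s t u ∈ A) (ht : t < T) :
    gains T H (branch s t u) = gains t H s + H t s * (u - s t) := by
  have hH' : ∀ j ≤ t, H j (branch s t u) = H j s := fun j hj =>
    hH j _ hbr s hs fun i hi => by simp [branch, hi.trans hj]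
  have hfreeze : gains T H (branch s t u) = gains (t + 1) H (branch s t u) := by
    refine (Finset.sum_subset (Finset.range_subset_range.2 ht) fun j _ hj => ?_).symm
    have hj : t < j := by simpa using hj
    simp [branch, hj.not_ge, (hj.trans (Nat.lt_succ_self j)).not_ge]
  rw [hfreeze, gains_succ, hH' t le_rfl]
  congr 1
  · refine Finset.sum_congr rfl fun j hj => ?_
    have hj : j < t := Finset.mem_range.1 hj
    simp [branch, hH' j hj.le, hj.le, Nat.succ_le_of_lt hj]
  · simp [branch]

lemma neg_le_gains_add_mul {H : ℕ → (ℕ → ℝ) → ℝ} {ψ : (ℕ → ℝ) → ℝ} {K : ℝ}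
    (hH : AdaptedOn (gridSpace T n a b) H) (hψ : GainsNonnegOn (gridSpace T n a b) T H ψ)
    (hK : ∀ s ∈ gridSpace T n a b ∩ stoppedPaths T, ψ s ≤ K)
    {s : ℕ → ℝ} (hs : s ∈ gridSpace T n a b) {t : ℕ} (ht : t < T) {u : ℝ}
    (hu : ∀ i, t < i → i ≤ T → u ∈ Icc (a i) (b i)) (hun : ∃ k : ℕ, u = k / 2 ^ n) :
    -K ≤ gains t H s + H t s * (u - s t) := by
  have hbr := branch_mem_gridSpace hs hu hun
  have hnonneg := hψ _ hbr
  rw [gains_branch hH hs hbr ht] at hnonneg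
  linarith [hK _ ⟨hbr, branch_mem_stoppedPaths ht s u⟩]

structure AdmissibleBounds (T n : ℕ) (a b : ℕ → ℝ) (γ : ℝ) : Prop where
  a_zero : a 0 = 1
  b_zero : b 0 = 1
  gap_pos : 0 < γ
  gap_a : ∀ t < T, γ ≤ a t - a (t + 1)
  gap_b : ∀ t < T, γ ≤ b (t + 1) - b t
  dyadic_a : ∀ i ≤ T, ∃ k : ℕ, a i = k / 2 ^ n
  dyadic_b : ∀ i ≤ T, ∃ k : ℕ, b i = k / 2 ^ n

namespace AdmissibleBounds

variable {γ K : ℝ} {H : ℕ → (ℕ → ℝ) → ℝ} {ψ : (ℕ → ℝ) → ℝ} {s : ℕ → ℝ} {t : ℕ}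
  (hB : AdmissibleBounds T n a b γ)
include hB

lemma antitoneOn : AntitoneOn a (Iic T) :=
  (strictAntiOn_Iic_of_succ_lt fun t ht => by
    rw [Order.succ_eq_add_one]; linarith [hB.gap_a t ht, hB.gap_pos]).antitoneOn

lemma monotoneOn : MonotoneOn b (Iic T) :=
  (strictMonoOn_Iic_of_lt_succ fun t ht => by
    rw [Order.succ_eq_add_one]; linarith [hB.gap_b t ht, hB.gap_pos]).monotoneOn

lemma a_le_b {i j : ℕ} (hi : i ≤ T) (hj : j ≤ T) : a i ≤ b j := by
  have := hB.antitoneOn (mem_Iic.2 (Nat.zero_le T)) hi (Nat.zero_le i)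
  have := hB.monotoneOn (mem_Iic.2 (Nat.zero_le T)) hj (Nat.zero_le j)
  linarith [hB.a_zero, hB.b_zero]

lemma mem_Icc_aT_bT (hs : s ∈ pathSpace T a b) {j : ℕ} (hj : j ≤ T) : s j ∈ Icc (a T) (b T) := by
  obtain ⟨h1, h2⟩ := mem_Icc_of_mem_pathSpace hB.a_zero hB.b_zero hs hj
  exact ⟨(hB.antitoneOn hj (mem_Iic.2 le_rfl) hj).trans h1,
    h2.trans (hB.monotoneOn hj (mem_Iic.2 le_rfl) hj)⟩

lemma gap_mul_abs_le (hH : AdaptedOn (gridSpace T n a b) H)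
    (hψ : GainsNonnegOn (gridSpace T n a b) T H ψ)
    (hK : ∀ s ∈ gridSpace T n a b ∩ stoppedPaths T, ψ s ≤ K)
    (hs : s ∈ gridSpace T n a b) (ht : t < T) :
    γ * |H t s| ≤ K + gains t H s := by
  have hst := mem_Icc_of_mem_pathSpace hB.a_zero hB.b_zero hs.1 ht.le
  have hdown := neg_le_gains_add_mul hH hψ hK hs ht (u := a (t + 1))
    (fun i hti hi => ⟨hB.antitoneOn ht hi hti, hB.a_le_b ht hi⟩) (hB.dyadic_a _ ht)
  have hup := neg_le_gains_add_mul hH hψ hK hs ht (u := b (t + 1))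
    (fun i hti hi => ⟨hB.a_le_b hi ht, hB.monotoneOn ht hi hti⟩) (hB.dyadic_b _ ht)
  have hγa : γ ≤ s t - a (t + 1) := by linarith [hB.gap_a t ht, hst.1]
  have hγb : γ ≤ b (t + 1) - s t := by linarith [hB.gap_b t ht, hst.2]
  rcases le_total 0 (H t s) with hH0 | hH0
  · rw [abs_of_nonneg hH0]
    nlinarith [mul_le_mul_of_nonneg_left hγa hH0]
  · rw [abs_of_nonpos hH0]
    nlinarith [mul_le_mul_of_nonneg_left hγb (neg_nonneg.2 hH0)]

lemma add_gains_le (hH : AdaptedOn (gridSpace T n a b) H)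
    (hψ : GainsNonnegOn (gridSpace T n a b) T H ψ)
    (hK : ∀ s ∈ gridSpace T n a b ∩ stoppedPaths T, ψ s ≤ K)
    (hs : s ∈ gridSpace T n a b) (ht : t ≤ T) :
    K + gains t H s ≤ K * (1 + (b T - a T) / γ) ^ t := by
  induction t with
  | zero => simp [gains]
  | succ t ih =>
    specialize ih (Nat.le_of_succ_le ht)
    have hD : 0 ≤ b T - a T := sub_nonneg.2 (hB.a_le_b le_rfl le_rfl)
    have hHt : |H t s| ≤ (K + gains t H s) / γ := by
      rw [le_div_iff₀ hB.gap_pos, mul_comm]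
      exact hB.gap_mul_abs_le hH hψ hK hs ht
    have hincr : |s (t + 1) - s t| ≤ b T - a T := by
      have h0 := hB.mem_Icc_aT_bT hs.1 (Nat.le_of_succ_le ht)
      have h1 := hB.mem_Icc_aT_bT hs.1 ht
      exact abs_sub_le_iff.2 ⟨by linarith [h1.2, h0.1], by linarith [h0.2, h1.1]⟩
    calc K + gains (t + 1) H s
        ≤ K + gains t H s + |H t s| * (b T - a T) := by
          have := (le_abs_self _).trans ((abs_mul (H t s) _).trans_le
            (mul_le_mul_of_nonneg_left hincr (abs_nonneg _)))
          rw [gains_succ]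
          linarith
      _ ≤ (K + gains t H s) * (1 + (b T - a T) / γ) := by
          have := mul_le_mul_of_nonneg_right hHt hD
          rw [div_mul_eq_mul_div] at this
          rw [mul_add, mul_one, mul_div_assoc']
          linarith
      _ ≤ K * (1 + (b T - a T) / γ) ^ t * (1 + (b T - a T) / γ) := by
          gcongr
          positivity [hB.gap_pos]
      _ = K * (1 + (b T - a T) / γ) ^ (t + 1) := by ring

lemma abs_le_of_gainsNonnegOn (hH : AdaptedOn (gridSpace T n a b) H)
    (hψ : GainsNonnegOn (gridSpace T n a b) T H ψ)
    (hK : ∀ s ∈ gridSpace T n a b ∩ stoppedPaths T, ψ s ≤ K) (hK0 : 0 ≤ K)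
    (hs : s ∈ gridSpace T n a b) (ht : t < T) :
    |H t s| ≤ K * (1 + (b T - a T) / γ) ^ T / γ := by
  rw [le_div_iff₀ hB.gap_pos, mul_comm]
  calc γ * |H t s| ≤ K + gains t H s := hB.gap_mul_abs_le hH hψ hK hs ht
    _ ≤ K * (1 + (b T - a T) / γ) ^ t := hB.add_gains_le hH hψ hK hs ht.le
    _ ≤ K * (1 + (b T - a T) / γ) ^ T := by
      gcongr
      exact le_add_of_nonneg_right
        (div_nonneg (sub_nonneg.2 (hB.a_le_b le_rfl le_rfl)) hB.gap_pos.le)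

lemma gains_eq_zero (hH : AdaptedOn (gridSpace T n a b) H)
    (h0 : ∀ s ∈ gridSpace T n a b, 0 ≤ gains T H s) (hs : s ∈ gridSpace T n a b) :
    gains T H s = 0 := by
  refine le_antisymm ?_ (h0 s hs)
  simpa using hB.add_gains_le hH (ψ := 0) (K := 0) (by simpa [GainsNonnegOn] using h0)
    (by simp) hs le_rfl

lemma exists_normalized_of_arbitrage {e : ℕ} {v : (ℕ → ℝ) → Fin e → ℝ} {h : Fin e → ℝ}
    (hH : AdaptedOn (gridSpace T n a b) H)
    (hψ : GainsNonnegOn (gridSpace T n a b) T H fun s => ∑ i, h i * v s i)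
    (harb : ∃ s ∈ gridSpace T n a b, 0 < gains T H s + ∑ i, h i * v s i) :
    ∃ (H' : ℕ → (ℕ → ℝ) → ℝ) (h' : Fin e → ℝ), AdaptedOn (gridSpace T n a b) H' ∧ ‖h'‖ = 1 ∧
      GainsNonnegOn (gridSpace T n a b) T H' fun s => ∑ i, h' i * v s i := by
  have hh : h ≠ 0 := by
    rintro rfl
    obtain ⟨s, hs, hpos⟩ := harb
    simp only [GainsNonnegOn, Pi.zero_apply, zero_mul, Finset.sum_const_zero, add_zero]
      at hpos hψ
    exact hpos.ne' (hB.gains_eq_zero hH hψ hs)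
  refine ⟨fun t s => ‖h‖⁻¹ * H t s, ‖h‖⁻¹ • h, hH.const_mul _, by simp [norm_smul, hh],
    fun s hs => ?_⟩
  have := mul_nonneg (inv_nonneg.2 (norm_nonneg h)) (hψ s hs)
  simpa [gains_const_mul, mul_add, Finset.mul_sum, mul_assoc] using this

end AdmissibleBounds

lemma eventually_dyadic {x : ℝ} (hx : ∃ k m : ℕ, x = k / 2 ^ m) :
    ∀ᶠ n in atTop, ∃ k : ℕ, x = k / 2 ^ n := by
  obtain ⟨k, m, rfl⟩ := hx
  filter_upwards [eventually_ge_atTop m] with n hmn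
  refine ⟨k * 2 ^ (n - m), ?_⟩
  obtain ⟨d, rfl⟩ := Nat.exists_eq_add_of_le hmn
  rw [Nat.add_sub_cancel_left, pow_add]
  push_cast
  field_simp

lemma exists_admissibleBounds (ha0 : a 0 = 1) (hb0 : b 0 = 1)
    (hadec : ∀ i, 1 ≤ i → i ≤ T → a i < a (i - 1))
    (hbinc : ∀ i, 1 ≤ i → i ≤ T → b (i - 1) < b i)
    (hady : ∀ i ≤ T, ∃ k m : ℕ, a i = (k : ℝ) / 2 ^ m)
    (hbdy : ∀ i ≤ T, ∃ k m : ℕ, b i = (k : ℝ) / 2 ^ m) :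
    ∃ γ, ∀ᶠ n in atTop, AdmissibleBounds T n a b γ := by
  have hgaps : ∀ᶠ γ in 𝓝[>] (0 : ℝ), ∀ t ∈ Iio T, γ ≤ a t - a (t + 1) ∧ γ ≤ b (t + 1) - b t := by
    refine (eventually_all_finite (finite_Iio T)).2 fun t ht => ?_
    have ha := hadec (t + 1) (Nat.le_add_left 1 t) ht
    have hb := hbinc (t + 1) (Nat.le_add_left 1 t) ht
    simp only [add_tsub_cancel_right] at ha hb
    exact ((eventually_le_nhds (sub_pos.2 ha)).and
      (eventually_le_nhds (sub_pos.2 hb))).filter_mono nhdsWithin_le_nhds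
  obtain ⟨γ, hγ, hγ0⟩ := (hgaps.and self_mem_nhdsWithin).exists
  have hdy : ∀ᶠ n in atTop, ∀ i ∈ Iic T,
      (∃ k : ℕ, a i = k / 2 ^ n) ∧ ∃ k : ℕ, b i = k / 2 ^ n :=
    (eventually_all_finite (finite_Iic T)).2 fun i hi =>
      (eventually_dyadic (hady i hi)).and (eventually_dyadic (hbdy i hi))
  refine ⟨γ, hdy.mono fun n hn => ⟨ha0, hb0, hγ0, fun t ht => (hγ t ht).1,
    fun t ht => (hγ t ht).2, fun i hi => (hn i hi).1, fun i hi => (hn i hi).2⟩⟩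

lemma sum_mul_le_card_mul_norm {ι : Type*} [Fintype ι] (x y : ι → ℝ) :
    ∑ i, x i * y i ≤ Fintype.card ι * (‖x‖ * ‖y‖) := by
  calc ∑ i, x i * y i ≤ ∑ _i : ι, ‖x‖ * ‖y‖ := by
        refine Finset.sum_le_sum fun i _ => (le_abs_self _).trans ?_
        rw [abs_mul]
        exact mul_le_mul (norm_le_pi_norm x i) (norm_le_pi_norm y i) (abs_nonneg _)
          (norm_nonneg _)
    _ = Fintype.card ι * (‖x‖ * ‖y‖) := by simp

lemma exists_static_payoff_le (ha0 : a 0 = 1) (hb0 : b 0 = 1) {e : ℕ}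
    {g : (ℕ → ℝ) → Fin e → ℝ} (hg : ∀ i, Continuous fun s => g s i)
    {c : ℕ → Fin e → ℝ} {C : ℝ} (hC : ∀ n, ‖c n‖ ≤ C) :
    ∃ K, 0 ≤ K ∧ ∀ n (h : Fin e → ℝ), ‖h‖ ≤ 1 →
      ∀ s ∈ pathSpace T a b ∩ stoppedPaths T, ∑ i, h i * (g s i - c n i) ≤ K := by
  obtain ⟨G, hG⟩ := (isCompact_pathSpace_inter_stoppedPaths ha0 hb0).exists_bound_of_continuousOn
    (continuous_pi hg).continuousOn
  have hC0 : 0 ≤ C := (norm_nonneg _).trans (hC 0)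
  refine ⟨e * (max G 0 + C), by positivity, fun n h hh s hs => ?_⟩
  calc ∑ i, h i * (g s i - c n i) ≤ e * (‖h‖ * ‖g s - c n‖) := by
        simpa using sum_mul_le_card_mul_norm h (g s - c n)
    _ ≤ e * (1 * (max G 0 + C)) := by
        gcongr
        exact (norm_sub_le _ _).trans (add_le_add ((hG s hs).trans (le_max_left _ _)) (hC n))
    _ = e * (max G 0 + C) := by ring

noncomputable def dyadicRound (T n : ℕ) (a s : ℕ → ℝ) : ℕ → ℝ :=
  fun j => if j ≤ T then max (a j) (⌊s j * 2 ^ n⌋₊ / 2 ^ n) else s j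

lemma dyadicRound_congr {t : ℕ} {s s' : ℕ → ℝ} (h : ∀ j ≤ t, s j = s' j) :
    ∀ j ≤ t, dyadicRound T n a s j = dyadicRound T n a s' j := fun j hj => by
  simp [dyadicRound, h j hj]

lemma dyadicRound_mem_gridSpace (ha0 : a 0 = 1) (hb0 : b 0 = 1)
    (hadyn : ∀ i ≤ T, ∃ k : ℕ, a i = k / 2 ^ n) {s : ℕ → ℝ} (hs : s ∈ pathSpace T a b) :
    dyadicRound T n a s ∈ gridSpace T n a b := by
  have hfloor : ∀ j ≤ T, (⌊s j * 2 ^ n⌋₊ : ℝ) / 2 ^ n ≤ s j := fun j hj => by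
    obtain ⟨k, hk⟩ := hadyn j hj
    have hsj := (mem_Icc_of_mem_pathSpace ha0 hb0 hs hj).1
    rw [div_le_iff₀ (by positivity)]
    exact Nat.floor_le (mul_nonneg ((hk ▸ by positivity : 0 ≤ a j).trans hsj) (by positivity))
  refine ⟨⟨?_, fun i hi hiT => ?_⟩, fun j hj => ?_⟩
  · have h2n : ⌊(2 : ℝ) ^ n⌋₊ = 2 ^ n := by exact_mod_cast Nat.floor_natCast (R := ℝ) (2 ^ n)
    simp [dyadicRound, hs.1, ha0, h2n]
  · have hsi := mem_Icc_of_mem_pathSpace ha0 hb0 hs hiT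
    simp only [dyadicRound, if_pos hiT]
    exact ⟨le_max_left _ _, max_le (hsi.1.trans hsi.2) ((hfloor i hiT).trans hsi.2)⟩
  · obtain ⟨k, hk⟩ := hadyn j hj
    refine ⟨max k ⌊s j * 2 ^ n⌋₊, ?_⟩
    simp only [dyadicRound, if_pos hj, hk, Nat.cast_max,
      max_div_div_right (by positivity : (0 : ℝ) ≤ 2 ^ n)]

lemma tendsto_dyadicRound (ha0 : a 0 = 1) (hb0 : b 0 = 1) (ha : ∀ j ≤ T, 0 ≤ a j)
    {s : ℕ → ℝ} (hs : s ∈ pathSpace T a b) :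
    Tendsto (fun n => dyadicRound T n a s) atTop (𝓝 s) := by
  refine tendsto_pi_nhds.2 fun j => ?_
  by_cases hj : j ≤ T
  · have hsj := mem_Icc_of_mem_pathSpace ha0 hb0 hs hj
    have hfloor := (tendsto_nat_floor_mul_div_atTop ((ha j hj).trans hsj.1)).comp
      (tendsto_pow_atTop_atTop_of_one_lt (one_lt_two (α := ℝ)))
    simpa only [dyadicRound, if_pos hj, max_eq_right hsj.1, Function.comp_def] using
      (tendsto_const_nhds (x := a j)).max hfloor
  · simp only [dyadicRound, if_neg hj]
    exact tendsto_const_nhds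

lemma Ultrafilter.tendsto_limUnder_of_isCompact {α X : Type*} [TopologicalSpace X] [Nonempty X]
    (U : Ultrafilter α) {f : α → X} {K : Set X} (hK : IsCompact K) (hf : ∀ᶠ x in U, f x ∈ K) :
    Tendsto f U (𝓝 (limUnder U f)) := by
  obtain ⟨x, -, hx⟩ := hK.ultrafilter_le_nhds (U.map f) (le_principal_iff.2 hf)
  exact tendsto_nhds_limUnder ⟨x, hx⟩

lemma adaptedOn_limUnder {ι : Type*} {l : Filter ι} {A : Set (ℕ → ℝ)} {B : ι → Set (ℕ → ℝ)}
    {F : ι → ℕ → (ℕ → ℝ) → ℝ} {r : ι → (ℕ → ℝ) → ℕ → ℝ}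
    (hF : ∀ᶠ i in l, AdaptedOn (B i) (F i)) (hr : ∀ᶠ i in l, MapsTo (r i) A (B i))
    (hloc : ∀ i t s s', (∀ j ≤ t, s j = s' j) → ∀ j ≤ t, r i s j = r i s' j) :
    AdaptedOn A fun t s => limUnder l fun i => F i t (r i s) := by
  intro t s hs s' hs' hss'
  have hev : (fun i => F i t (r i s)) =ᶠ[l] fun i => F i t (r i s') := by
    filter_upwards [hF, hr] with i hFi hri
    exact hFi t _ (hri hs) _ (hri hs') (hloc i t s s' hss')
  simp only [limUnder, map_congr hev]

lemma tendsto_gains {ι : Type*} {l : Filter ι} {F : ι → ℕ → (ℕ → ℝ) → ℝ} {σ : ι → ℕ → ℝ}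
    {H : ℕ → (ℕ → ℝ) → ℝ} {s : ℕ → ℝ}
    (hF : ∀ t < T, Tendsto (fun i => F i t (σ i)) l (𝓝 (H t s))) (hσ : Tendsto σ l (𝓝 s)) :
    Tendsto (fun i => gains T (F i) (σ i)) l (𝓝 (gains T H s)) :=
  tendsto_finsetSum _ fun t ht => (hF t (Finset.mem_range.1 ht)).mul
    ((tendsto_pi_nhds.1 hσ (t + 1)).sub (tendsto_pi_nhds.1 hσ t))

/-- An ultrafilter replaces the paper's diagonal subsequence: it makes the bounded sequences
`H n t (dyadicRound T n a s)` converge for all the (uncountably many) paths `s` at once. -/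
theorem exists_gainsNonnegOn_pathSpace_of_frequently (ha0 : a 0 = 1) (hb0 : b 0 = 1)
    (ha : ∀ j ≤ T, 0 ≤ a j) {e : ℕ} {g : (ℕ → ℝ) → Fin e → ℝ}
    (hg : ∀ i, Continuous fun s => g s i) {c : ℕ → Fin e → ℝ} (hc : Tendsto c atTop (𝓝 0))
    {M : ℝ} (hfreq : ∃ᶠ n in atTop, (∀ i ≤ T, ∃ k : ℕ, a i = k / 2 ^ n) ∧
      ∃ (H : ℕ → (ℕ → ℝ) → ℝ) (h : Fin e → ℝ), AdaptedOn (gridSpace T n a b) H ∧ ‖h‖ = 1 ∧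
        GainsNonnegOn (gridSpace T n a b) T H (fun s => ∑ i, h i * (g s i - c n i)) ∧
        ∀ t < T, ∀ s ∈ gridSpace T n a b, |H t s| ≤ M) :
    ∃ (H : ℕ → (ℕ → ℝ) → ℝ) (h : Fin e → ℝ), AdaptedOn (pathSpace T a b) H ∧ ‖h‖ = 1 ∧
      GainsNonnegOn (pathSpace T a b) T H fun s => ∑ i, h i * g s i := by
  obtain ⟨U, hU⟩ := exists_ultrafilter_iff.2 (frequently_iff_neBot.1 hfreq)
  have hUtop : (U : Filter ℕ) ≤ atTop := hU.trans inf_le_left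
  have hUfreq : ∀ᶠ n in (U : Filter ℕ), _ := hU.trans inf_le_right (mem_principal_self _)
  obtain ⟨H, hH⟩ := (hUfreq.mono fun n hn => hn.2).choice
  obtain ⟨h, hh⟩ := hH.choice
  have hround : ∀ᶠ n in (U : Filter ℕ),
      MapsTo (dyadicRound T n a) (pathSpace T a b) (gridSpace T n a b) :=
    hUfreq.mono fun n hn s hs => dyadicRound_mem_gridSpace ha0 hb0 hn.1 hs
  have hround_tendsto : ∀ s ∈ pathSpace T a b,
      Tendsto (fun n => dyadicRound T n a s) U (𝓝 s) := fun s hs =>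
    (tendsto_dyadicRound ha0 hb0 ha hs).mono_left hUtop
  have hh_tendsto : Tendsto h U (𝓝 (limUnder U h)) :=
    U.tendsto_limUnder_of_isCompact (isCompact_closedBall 0 1)
      (hh.mono fun n hn => by simp [hn.2.1])
  have hH_tendsto : ∀ t < T, ∀ s ∈ pathSpace T a b,
      Tendsto (fun n => H n t (dyadicRound T n a s)) U
        (𝓝 (limUnder U fun n => H n t (dyadicRound T n a s))) := fun t ht s hs =>
    U.tendsto_limUnder_of_isCompact (isCompact_closedBall (0 : ℝ) M) (by
      filter_upwards [hh, hround] with n hn hrn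
      simpa using hn.2.2.2 t ht _ (hrn hs))
  refine ⟨fun t s => limUnder U fun n => H n t (dyadicRound T n a s), limUnder U h,
    adaptedOn_limUnder (hh.mono fun n hn => hn.1) hround fun n t s s' => dyadicRound_congr,
    ?_, fun s hs => ?_⟩
  · exact tendsto_nhds_unique hh_tendsto.norm
      (tendsto_const_nhds.congr' (hh.mono fun n hn => hn.2.1.symm))
  have hstatic : Tendsto (fun n => ∑ i, h n i * (g (dyadicRound T n a s) i - c n i)) U
      (𝓝 (∑ i, limUnder U h i * (g s i - 0))) :=
    tendsto_finsetSum _ fun i _ => (tendsto_pi_nhds.1 hh_tendsto i).mul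
      ((((hg i).tendsto s).comp (hround_tendsto s hs)).sub
        (tendsto_pi_nhds.1 (hc.mono_left hUtop) i))
  have hlim := ge_of_tendsto
    ((tendsto_gains (H := fun t s => limUnder U fun n => H n t (dyadicRound T n a s))
      (fun t ht => hH_tendsto t ht s hs) (hround_tendsto s hs)).add hstatic)
    (by filter_upwards [hh, hround] with n hn hrn; exact hn.2.2.1 _ (hrn hs))
  simpa only [sub_zero] using hlim

end

theorem stmt19_general (T e : ℕ) (a b : ℕ → ℝ)
    (ha0 : a 0 = 1) (hb0 : b 0 = 1)
    (hadec : ∀ i, 1 ≤ i → i ≤ T → a i < a (i - 1))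
    (hbinc : ∀ i, 1 ≤ i → i ≤ T → b (i - 1) < b i)
    (hady : ∀ i ≤ T, ∃ k m : ℕ, a i = (k : ℝ) / 2 ^ m)
    (hbdy : ∀ i ≤ T, ∃ k m : ℕ, b i = (k : ℝ) / 2 ^ m)
    (g : (ℕ → ℝ) → Fin e → ℝ)
    (hgcont : ∀ i : Fin e, Continuous fun s : ℕ → ℝ => g s i)
    (hAss : ∀ (H : ℕ → (ℕ → ℝ) → ℝ) (h : Fin e → ℝ), AdaptedOn (pathSpace T a b) H →
      h ≠ 0 → ∃ s ∈ pathSpace T a b, gains T H s + ∑ i, h i * g s i < 0)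
    (c : ℕ → Fin e → ℝ)
    (hc : Filter.Tendsto (fun n => ‖c n‖) Filter.atTop (nhds 0)) :
    ∀ᶠ n in Filter.atTop,
      ¬∃ (H : ℕ → (ℕ → ℝ) → ℝ) (h : Fin e → ℝ),
        AdaptedOn (gridSpace T n a b) H ∧
        (∀ s ∈ gridSpace T n a b, 0 ≤ gains T H s + ∑ i, h i * (g s i - c n i)) ∧
        ∃ s ∈ gridSpace T n a b, 0 < gains T H s + ∑ i, h i * (g s i - c n i) := by
  obtain ⟨γ, hB⟩ := exists_admissibleBounds ha0 hb0 hadec hbinc hady hbdy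
  obtain ⟨C, hC⟩ : ∃ C, ∀ n, ‖c n‖ ≤ C :=
    hc.bddAbove_range.imp fun C hC n => hC (mem_range_self n)
  obtain ⟨K, hK0, hK⟩ := exists_static_payoff_le ha0 hb0 hgcont hC
  have ha : ∀ j ≤ T, 0 ≤ a j := fun j hj => by
    obtain ⟨k, m, hk⟩ := hady j hj
    rw [hk]; positivity
  by_contra harb
  obtain ⟨H, h, hH, hh, hnonneg⟩ := exists_gainsNonnegOn_pathSpace_of_frequently ha0 hb0 ha
    hgcont (tendsto_zero_iff_norm_tendsto_zero.2 hc) (M := K * (1 + (b T - a T) / γ) ^ T / γ)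
    ((not_eventually.1 harb).and_eventually hB |>.mono fun n ⟨hn, hBn⟩ => by
      obtain ⟨H, h, hH, hψ, hpos⟩ := not_not.1 hn
      obtain ⟨H', h', hH', hh', hψ'⟩ := hBn.exists_normalized_of_arbitrage hH hψ hpos
      exact ⟨hBn.dyadic_a, H', h', hH', hh', hψ', fun t ht s hs =>
        hBn.abs_le_of_gainsNonnegOn hH' hψ' (fun s hs => hK n h' hh'.le s ⟨hs.1.1, hs.2⟩)
          hK0 hs ht⟩)
  obtain ⟨s, hs, hneg⟩ := hAss H h hH (by rintro rfl; simp at hh)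
  exact hneg.not_ge (hnonneg s hs)

/-- Consistency of the discretized market: under the standing assumption (no
nontrivial semi-static position super-replicates 0 from price 0, with `h ≠ 0`)
and continuity of `g`, if `cⁿ → 0` then for all `n` large enough the discretized
market on `Ωⁿ` with option prices `cⁿ` admits no arbitrage. -/
theorem stmt19 (T e : ℕ) (hT : 1 ≤ T) (a b : ℕ → ℝ)
    (ha0 : a 0 = 1) (hb0 : b 0 = 1) (haT : 0 ≤ a T)
    (hadec : ∀ i, 1 ≤ i → i ≤ T → a i < a (i - 1))
    (hbinc : ∀ i, 1 ≤ i → i ≤ T → b (i - 1) < b i)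
    (hady : ∀ i ≤ T, ∃ k m : ℕ, a i = (k : ℝ) / 2 ^ m)
    (hbdy : ∀ i ≤ T, ∃ k m : ℕ, b i = (k : ℝ) / 2 ^ m)
    (g : (ℕ → ℝ) → Fin e → ℝ)
    (hgcont : ∀ i : Fin e, Continuous fun s : ℕ → ℝ => g s i)
    (hAss : ∀ (H : ℕ → (ℕ → ℝ) → ℝ) (h : Fin e → ℝ), AdaptedOn (pathSpace T a b) H →
      h ≠ 0 → ∃ s ∈ pathSpace T a b, gains T H s + ∑ i, h i * g s i < 0)
    (c : ℕ → Fin e → ℝ)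
    (hc : Filter.Tendsto (fun n => ‖c n‖) Filter.atTop (nhds 0)) :
    ∀ᶠ n in Filter.atTop,
      ¬∃ (H : ℕ → (ℕ → ℝ) → ℝ) (h : Fin e → ℝ),
        AdaptedOn (gridSpace T n a b) H ∧
        (∀ s ∈ gridSpace T n a b, 0 ≤ gains T H s + ∑ i, h i * (g s i - c n i)) ∧
        ∃ s ∈ gridSpace T n a b, 0 < gains T H s + ∑ i, h i * (g s i - c n i) :=
  stmt19_general T e a b ha0 hb0 hadec hbinc hady hbdy g hgcont hAss c hc
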